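/- arXiv:1704.05998 — 2 statements merged into one kernel-verified Lean document; each statement's English description precedes it below -/
import Mathlib

section
/- Let n ≥ 1, let R be an n×n real upper triangular matrix with positive diagonal entries r_11,…,r_nn, let σ > 0, and let B = {x ∈ ℤⁿ : ℓ ≤ x ≤ u} with ℓ, u ∈ ℤⁿ and ℓ_i < u_i for all i. Fix a deterministic x̂ ∈ B, let ṽ ~ N(0, σ²Iₙ), set ỹ = R x̂ + ṽ, and let x^BB be the box-constrained Babai detector defined recursively for i = n,…,1 by c_i = (ỹ_i − ∑_{j=i+1}^n r_ij x_j^BB)/r_ii and x_i^BB = ℓ_i if ⌊c_i⌉ ≤ ℓ_i, x_i^BB = ⌊c_i⌉ if ℓ_i < ⌊c_i⌉ < u_i, x_i^BB = u_i if ⌊c_i⌉ ≥ u_i. Then ∏_{i=1}^n φ_σ(r_ii) ≤ Pr(x^BB = x̂) ≤ 2^{−n} ∏_{i=1}^n (1 + φ_σ(r_ii)); moreover the lower bound is attained if and only if ℓ_i < x̂_i < u_i for all i, and the upper bound is attained if and only if x̂_i ∈ {ℓ_i, u_i} for all i. -/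
open MeasureTheory ProbabilityTheory Matrix
open scoped ENNReal NNReal

/-- Nearest integer rounding, with ties broken toward the integer of smaller magnitude. -/
noncomputable def nround (x : ℝ) : ℤ :=
  if 0 ≤ x then ⌈x - 1 / 2⌉ else ⌊x + 1 / 2⌋

/-- Clamp the nearest integer of `c` to the interval `[a, b]`:
`a` if `⌊c⌉ ≤ a`, `b` if `⌊c⌉ ≥ b`, and `⌊c⌉` otherwise. -/
noncomputable def clampInt (a b : ℤ) (c : ℝ) : ℤ :=
  if nround c ≤ a then a
  else if b ≤ nround c then b
  else nround c

/-- The box-constrained rounding detector computed from `d`. -/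
noncomputable def roundDetector {n : ℕ} (l u : Fin n → ℤ) (d : Fin n → ℝ) : Fin n → ℤ :=
  fun i => clampInt (l i) (u i) (d i)

/-- Auxiliary recursion for the box-constrained Babai detector: `babaiAux R l u y k`
has the correct Babai values at indices `i` with `i + k ≥ n` (computed from the last
index downwards). -/
noncomputable def babaiAux {n : ℕ} (R : Matrix (Fin n) (Fin n) ℝ) (l u : Fin n → ℤ)
    (y : Fin n → ℝ) : ℕ → Fin n → ℤ
  | 0 => fun _ => 0
  | k + 1 => fun i =>
      if i.val + (k + 1) = n then
        clampInt (l i) (u i)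
          ((y i - ∑ j : Fin n, if i < j then R i j * (babaiAux R l u y k j : ℝ) else 0) / R i i)
      else babaiAux R l u y k i

/-- The box-constrained Babai detector computed from `y`, for upper triangular `R`:
for `i = n, …, 1`, `c_i = (y_i - ∑_{j>i} r_{ij} x_j^BB)/r_{ii}` and `x_i^BB` is `⌊c_i⌉`
clamped to `[l_i, u_i]`. -/
noncomputable def babaiDetector {n : ℕ} (R : Matrix (Fin n) (Fin n) ℝ) (l u : Fin n → ℤ)
    (y : Fin n → ℝ) : Fin n → ℤ :=
  babaiAux R l u y n

/-- `phi σ ζ = (2/√(2π)) ∫_0^{ζ/(2σ)} exp(-t²/2) dt`. -/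
noncomputable def phi (σ ζ : ℝ) : ℝ :=
  2 / Real.sqrt (2 * Real.pi) * ∫ t in (0:ℝ)..(ζ / (2 * σ)), Real.exp (-(t ^ 2) / 2)

/-!
Feeding the true `x̂` back through the triangular recursion, the Babai centre of coordinate `i` is
`x̂ᵢ + ṽᵢ / rᵢᵢ` as soon as the coordinates above `i` are correct; so the detector returns `x̂`
exactly when every coordinate, taken on its own, rounds and clamps `x̂ᵢ + ṽᵢ / rᵢᵢ` back to `x̂ᵢ`.
These events are independent, so the success probability is a product. An interior coordinate
succeeds when `|ṽᵢ| < rᵢᵢ / 2`, with probability `φ_σ(rᵢᵢ)`; one at the lower (upper) end of the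
box already when `ṽᵢ < rᵢᵢ / 2` (`ṽᵢ > -rᵢᵢ / 2`), which by symmetry of the Gaussian has probability
`(1 + φ_σ(rᵢᵢ)) / 2`. As `0 < φ_σ < 1`, both bounds and their equality cases follow.
-/

open Set Real

section Rounding

variable {x : ℝ}

lemma nround_le_add_half (x : ℝ) : (nround x : ℝ) ≤ x + 1 / 2 := by
  unfold nround
  split
  · linarith [Int.ceil_lt_add_one (x - 1 / 2)]
  · linarith [Int.floor_le (x + 1 / 2)]

lemma sub_half_le_nround (x : ℝ) : x - 1 / 2 ≤ (nround x : ℝ) := by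
  unfold nround
  split
  · linarith [Int.le_ceil (x - 1 / 2)]
  · linarith [Int.lt_floor_add_one (x + 1 / 2)]

lemma nround_eq_of_abs_sub_lt {m : ℤ} (hx : |x - m| < 1 / 2) : nround x = m := by
  obtain ⟨hx₁, hx₂⟩ := abs_lt.mp hx
  have h₁ : (nround x : ℝ) < m + 1 := by linarith [nround_le_add_half x]
  have h₂ : (m : ℝ) - 1 < nround x := by linarith [sub_half_le_nround x]
  have h₁' : nround x < m + 1 := by exact_mod_cast h₁
  have h₂' : m - 1 < nround x := by exact_mod_cast h₂
  omega

lemma measurable_nround : Measurable nround :=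
  Measurable.ite (measurableSet_le measurable_const measurable_id)
    (measurable_id.sub_const _).ceil (measurable_id.add_const _).floor

variable {a b m : ℤ}

lemma clampInt_eq_of_abs_sub_lt (ha : a < m) (hb : m < b) (hx : |x - m| < 1 / 2) :
    clampInt a b x = m := by
  rw [clampInt, nround_eq_of_abs_sub_lt hx, if_neg (by omega), if_neg (by omega)]

lemma abs_sub_le_of_clampInt_eq (ha : a < m) (hb : m < b) (h : clampInt a b x = m) :
    |x - m| ≤ 1 / 2 := by
  have hround : nround x = m := by
    unfold clampInt at h
    split_ifs at h <;> omega
  rw [abs_le, ← hround]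
  constructor <;> linarith [nround_le_add_half x, sub_half_le_nround x]

lemma clampInt_eq_left (hx : x < a + 1 / 2) : clampInt a b x = a := by
  have : (nround x : ℝ) < a + 1 := by linarith [nround_le_add_half x]
  have : nround x < a + 1 := by exact_mod_cast this
  rw [clampInt, if_pos (by omega)]

lemma le_of_clampInt_eq_left (hab : a < b) (h : clampInt a b x = a) : x ≤ a + 1 / 2 := by
  have hround : nround x ≤ a := by
    unfold clampInt at h
    split_ifs at h <;> omega
  have : (nround x : ℝ) ≤ a := by exact_mod_cast hround
  linarith [sub_half_le_nround x]

lemma clampInt_eq_right (hab : a < b) (hx : b - 1 / 2 < x) : clampInt a b x = b := by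
  have : (b : ℝ) - 1 < nround x := by linarith [sub_half_le_nround x]
  have : b - 1 < nround x := by exact_mod_cast this
  rw [clampInt, if_neg (by omega), if_pos (by omega)]

lemma le_of_clampInt_eq_right (hab : a < b) (h : clampInt a b x = b) : b - 1 / 2 ≤ x := by
  have hround : b ≤ nround x := by
    unfold clampInt at h
    split_ifs at h <;> omega
  have : (b : ℝ) ≤ nround x := by exact_mod_cast hround
  linarith [nround_le_add_half x]

lemma measurable_clampInt (a b : ℤ) : Measurable (clampInt a b) :=
  Measurable.ite (measurable_nround (measurableSet_Iic (a := a))) measurable_const <|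
    Measurable.ite (measurable_nround (measurableSet_Ici (a := b))) measurable_const
      measurable_nround

end Rounding

section Babai

variable {n : ℕ} (R : Matrix (Fin n) (Fin n) ℝ) (l u : Fin n → ℤ) (y : Fin n → ℝ)

lemma babaiAux_succ_apply (k : ℕ) (i : Fin n) :
    babaiAux R l u y (k + 1) i =
      if i.val + (k + 1) = n then
        clampInt (l i) (u i)
          ((y i - ∑ j, if i < j then R i j * (babaiAux R l u y k j : ℝ) else 0) / R i i)
      else babaiAux R l u y k i :=
  rfl

lemma babaiAux_eq_of_le {k k' : ℕ} (hk : k ≤ k') {i : Fin n} (hi : n ≤ i.val + k) :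
    babaiAux R l u y k' i = babaiAux R l u y k i := by
  induction k', hk using Nat.le_induction with
  | base => rfl
  | succ k' hkk' ih => rw [babaiAux_succ_apply, if_neg (by omega), ih]

lemma babaiDetector_apply (i : Fin n) :
    babaiDetector R l u y i = clampInt (l i) (u i)
      ((y i - ∑ j, if i < j then R i j * (babaiDetector R l u y j : ℝ) else 0) / R i i) := by
  obtain ⟨k, hk⟩ : ∃ k, n = i.val + (k + 1) := ⟨n - i.val - 1, by omega⟩
  rw [babaiDetector, babaiAux_eq_of_le R l u y (k := k + 1) (by omega) (by omega),
    babaiAux_succ_apply, if_pos hk.symm]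
  congr 3
  refine Finset.sum_congr rfl fun j _ => ?_
  split_ifs with hij
  · have : i.val < j.val := hij
    rw [babaiAux_eq_of_le R l u y (k := k) (k' := n) (by omega) (by omega)]
  · rfl

lemma babai_center_eq_of_eq_above {i : Fin n} (hupper : ∀ j < i, R i j = 0) (hii : R i i ≠ 0)
    (x g : Fin n → ℤ) (w : Fin n → ℝ) (hg : ∀ j, i < j → g j = x j) :
    ((R *ᵥ (fun j => (x j : ℝ))) i + w i - ∑ j, if i < j then R i j * (g j : ℝ) else 0) / R i i
      = x i + w i / R i i := by
  have hrow : (R *ᵥ (fun j => (x j : ℝ))) i - ∑ j, (if i < j then R i j * (g j : ℝ) else 0)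
      = R i i * x i := by
    rw [mulVec, dotProduct, ← Finset.sum_sub_distrib, Finset.sum_eq_single i]
    · simp
    · intro j _ hji
      rcases lt_or_gt_of_ne hji with h | h
      · simp [hupper j h, not_lt.mpr h.le]
      · simp [h, hg j h]
    · simp
  field_simp
  linarith

theorem babaiDetector_mulVec_add_eq_iff (hupper : ∀ i j : Fin n, j < i → R i j = 0)
    (hdiag : ∀ i, R i i ≠ 0) (x : Fin n → ℤ) (w : Fin n → ℝ) :
    babaiDetector R l u (fun i => (R *ᵥ (fun j => (x j : ℝ))) i + w i) = x
      ↔ ∀ i, clampInt (l i) (u i) (x i + w i / R i i) = x i := by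
  set xBB := babaiDetector R l u (fun i => (R *ᵥ (fun j => (x j : ℝ))) i + w i)
  have hstep : ∀ i, (∀ j, i < j → xBB j = x j) →
      xBB i = clampInt (l i) (u i) (x i + w i / R i i) := fun i hi =>
    (babaiDetector_apply R l u _ i).trans
      (by rw [babai_center_eq_of_eq_above R (hupper i) (hdiag i) x _ w hi])
  constructor
  · intro h i
    exact (hstep i fun j _ => congrFun h j).symm.trans (congrFun h i)
  · intro h
    funext i
    induction i using WellFoundedGT.induction with
    | _ i ih => rw [hstep i ih, h i]

end Babai

theorem measureReal_babaiDetector_eq_prod {n : ℕ} {R : Matrix (Fin n) (Fin n) ℝ}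
    (hupper : ∀ i j : Fin n, j < i → R i j = 0) (hdiag : ∀ i, R i i ≠ 0) (l u x : Fin n → ℤ)
    {Ω : Type*} [MeasurableSpace Ω] {P : Measure Ω} {μ : Measure ℝ} [IsProbabilityMeasure μ]
    {v : Ω → Fin n → ℝ} (hv : P.map v = Measure.pi fun _ => μ) :
    P.real {ω | babaiDetector R l u (fun i => (R *ᵥ (fun j => (x j : ℝ))) i + v ω i) = x}
      = ∏ i, μ.real {t | clampInt (l i) (u i) (x i + t / R i i) = x i} := by
  -- a map that is not a.e.-measurable pushes `P` forward to `0`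
  have hvm : AEMeasurable v P := .of_map_ne_zero (hv ▸ IsProbabilityMeasure.ne_zero _)
  have hE : ∀ i, MeasurableSet {t : ℝ | clampInt (l i) (u i) (x i + t / R i i) = x i} :=
    fun i => (measurable_clampInt _ _).comp (by fun_prop) (measurableSet_singleton _)
  have hset : {ω | babaiDetector R l u (fun i => (R *ᵥ (fun j => (x j : ℝ))) i + v ω i) = x}
      = v ⁻¹' univ.pi fun i => {t | clampInt (l i) (u i) (x i + t / R i i) = x i} := by
    ext ω
    simpa only [mem_ofPred_eq, mem_preimage, mem_univ_pi]
      using babaiDetector_mulVec_add_eq_iff R l u hupper hdiag x (v ω)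
  rw [hset, measureReal_def, ← Measure.map_apply_of_aemeasurable hvm (.univ_pi hE), hv,
    Measure.pi_pi, ENNReal.toReal_prod]
  rfl

section SymmetricMeasure

variable {μ : Measure ℝ} [μ.IsNegInvariant]

lemma measureReal_Ici_neg (c : ℝ) : μ.real (Ici (-c)) = μ.real (Iic c) := by
  rw [← neg_Iic, measureReal_def, measureReal_def, Measure.measure_neg]

variable [IsProbabilityMeasure μ] [NullSingletonClass μ]

lemma measureReal_Iic_zero : μ.real (Iic 0) = 1 / 2 := by
  have hsymm : μ.real (Ici 0) = μ.real (Iic 0) := by simpa using measureReal_Ici_neg (μ := μ) 0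
  have hsum := measureReal_add_measureReal_compl (μ := μ) (measurableSet_Iic (a := (0 : ℝ)))
  rw [compl_Iic, measureReal_congr Ioi_ae_eq_Ici, hsymm, probReal_univ] at hsum
  linarith

lemma measureReal_Iic_of_nonneg {c : ℝ} (hc : 0 ≤ c) :
    μ.real (Iic c) = 1 / 2 + μ.real (Ioc 0 c) := by
  rw [← Iic_union_Ioc_eq_Iic hc, measureReal_union (Iic_disjoint_Ioc le_rfl) measurableSet_Ioc,
    measureReal_Iic_zero]

lemma measureReal_Icc_neg_self {c : ℝ} (hc : 0 ≤ c) :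
    μ.real (Icc (-c) c) = 2 * μ.real (Ioc 0 c) := by
  have hleft : μ.real (Icc (-c) 0) = μ.real (Ioc 0 c) := by
    rw [show Icc (-c) 0 = -Icc 0 c by rw [neg_Icc, neg_zero], measureReal_def, measureReal_def,
      Measure.measure_neg, measure_congr Ioc_ae_eq_Icc]
  rw [← Icc_union_Ioc_eq_Icc (neg_nonpos.mpr hc) hc,
    measureReal_union ((Iic_disjoint_Ioc le_rfl).mono_left Icc_subset_Iic_self) measurableSet_Ioc,
    hleft]
  ring

end SymmetricMeasure

section Gaussian

instance isNegInvariant_gaussianReal_zero (v : ℝ≥0) : (gaussianReal 0 v).IsNegInvariant :=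
  ⟨by rw [Measure.neg_def]; simpa using gaussianReal_map_neg (μ := 0) (v := v)⟩

variable {σ : ℝ} {v : ℝ≥0}

lemma ne_zero_of_coe_eq_sq (hσ : σ ≠ 0) (hv : (v : ℝ) = σ ^ 2) : v ≠ 0 := by
  rw [ne_eq, ← NNReal.coe_eq_zero, hv]
  exact pow_ne_zero 2 hσ

lemma gaussianPDFReal_zero_eq (hσ : 0 < σ) (hv : (v : ℝ) = σ ^ 2) (x : ℝ) :
    gaussianPDFReal 0 v x = (√(2 * π))⁻¹ * σ⁻¹ * exp (-(x / σ) ^ 2 / 2) := by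
  rw [gaussianPDFReal, hv, sqrt_mul (by positivity), sqrt_sq hσ.le, mul_inv, sub_zero, div_pow]
  congr 2
  field_simp

lemma gaussianReal_real_Ioc_zero_half (hσ : 0 < σ) (hv : (v : ℝ) = σ ^ 2) {r : ℝ} (hr : 0 ≤ r) :
    (gaussianReal 0 v).real (Ioc 0 (r / 2)) = phi σ r / 2 := by
  rw [measureReal_def, gaussianReal_apply_eq_integral _ (ne_zero_of_coe_eq_sq hσ.ne' hv),
    ENNReal.toReal_ofReal (setIntegral_nonneg measurableSet_Ioc
      fun x _ => gaussianPDFReal_nonneg _ _ x),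
    ← intervalIntegral.integral_of_le (by linarith)]
  simp only [gaussianPDFReal_zero_eq hσ hv]
  rw [intervalIntegral.integral_const_mul,
    intervalIntegral.integral_comp_div (fun t => exp (-t ^ 2 / 2)) hσ.ne', phi, zero_div,
    div_div, mul_comm 2 σ, smul_eq_mul]
  field_simp

lemma phi_pos (hσ : 0 < σ) {r : ℝ} (hr : 0 < r) : 0 < phi σ r := by
  have hint : 0 < ∫ t in (0 : ℝ)..r / (2 * σ), exp (-t ^ 2 / 2) :=
    intervalIntegral.intervalIntegral_pos_of_pos_on
      ((by fun_prop : Continuous fun t : ℝ => exp (-t ^ 2 / 2)).intervalIntegrable _ _)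
      (fun t _ => exp_pos _) (by positivity)
  unfold phi
  positivity

lemma phi_lt_one (hσ : 0 < σ) {r : ℝ} (hr : 0 < r) : phi σ r < 1 := by
  obtain ⟨v, hv⟩ : ∃ v : ℝ≥0, (v : ℝ) = σ ^ 2 := ⟨⟨σ ^ 2, sq_nonneg σ⟩, rfl⟩
  have hv₀ := ne_zero_of_coe_eq_sq hσ.ne' hv
  have := nullSingletonClass_gaussianReal (μ := 0) hv₀
  have htail : 0 < (gaussianReal 0 v).real (Ioi (r / 2)) := by
    refine ENNReal.toReal_pos (fun h => ?_) (measure_ne_top _ _)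
    simpa using gaussianReal_absolutelyContinuous' 0 hv₀ h
  have hsum := measureReal_add_measureReal_compl (μ := gaussianReal 0 v)
    (measurableSet_Iic (a := r / 2))
  rw [compl_Iic, probReal_univ, measureReal_Iic_of_nonneg (by positivity),
    gaussianReal_real_Ioc_zero_half hσ hv hr.le] at hsum
  linarith

end Gaussian

lemma measureReal_eq_of_subset_of_subset {α : Type*} [MeasurableSpace α] {μ : Measure α}
    [IsFiniteMeasure μ] {s t u : Set α} (hst : s ⊆ t) (htu : t ⊆ u) (hsu : s =ᵐ[μ] u) :
    μ.real t = μ.real u :=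
  le_antisymm (measureReal_mono htu) (measureReal_congr hsu ▸ measureReal_mono hst)

section CoordinateSuccess

variable {σ r : ℝ} {v : ℝ≥0} {a b m : ℤ}

lemma gaussianReal_real_clampInt_eq_of_lt_of_lt (hσ : 0 < σ) (hv : (v : ℝ) = σ ^ 2) (hr : 0 < r)
    (ha : a < m) (hb : m < b) :
    (gaussianReal 0 v).real {t | clampInt a b (m + t / r) = m} = phi σ r := by
  have := nullSingletonClass_gaussianReal (μ := 0) (ne_zero_of_coe_eq_sq hσ.ne' hv)
  rw [measureReal_eq_of_subset_of_subset (s := Ioo (-(r / 2)) (r / 2)) ?_ ?_ Ioo_ae_eq_Icc,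
    measureReal_Icc_neg_self (by positivity), gaussianReal_real_Ioc_zero_half hσ hv hr.le]
  · ring
  · intro t ht
    refine clampInt_eq_of_abs_sub_lt ha hb ?_
    rw [add_sub_cancel_left, abs_div, abs_of_pos hr, div_lt_iff₀ hr]
    linarith [abs_lt.mpr ht]
  · intro t ht
    have h := abs_sub_le_of_clampInt_eq ha hb ht
    rw [add_sub_cancel_left, abs_div, abs_of_pos hr, div_le_iff₀ hr] at h
    exact abs_le.mp (by linarith)

lemma gaussianReal_real_clampInt_left (hσ : 0 < σ) (hv : (v : ℝ) = σ ^ 2) (hr : 0 < r)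
    (hab : a < b) :
    (gaussianReal 0 v).real {t | clampInt a b (a + t / r) = a} = (1 + phi σ r) / 2 := by
  have := nullSingletonClass_gaussianReal (μ := 0) (ne_zero_of_coe_eq_sq hσ.ne' hv)
  rw [measureReal_eq_of_subset_of_subset (s := Iio (r / 2)) ?_ ?_ Iio_ae_eq_Iic,
    measureReal_Iic_of_nonneg (by positivity), gaussianReal_real_Ioc_zero_half hσ hv hr.le]
  · ring
  · intro t (ht : t < r / 2)
    have : t / r < 1 / 2 := by rw [div_lt_iff₀ hr]; linarith
    exact clampInt_eq_left (by linarith)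
  · intro t ht
    have : t / r ≤ 1 / 2 := by linarith [le_of_clampInt_eq_left hab ht]
    rw [div_le_iff₀ hr] at this
    exact (by linarith : t ≤ r / 2)

lemma gaussianReal_real_clampInt_right (hσ : 0 < σ) (hv : (v : ℝ) = σ ^ 2) (hr : 0 < r)
    (hab : a < b) :
    (gaussianReal 0 v).real {t | clampInt a b (b + t / r) = b} = (1 + phi σ r) / 2 := by
  have := nullSingletonClass_gaussianReal (μ := 0) (ne_zero_of_coe_eq_sq hσ.ne' hv)
  rw [measureReal_eq_of_subset_of_subset (s := Ioi (-(r / 2))) ?_ ?_ Ioi_ae_eq_Ici,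
    measureReal_Ici_neg, measureReal_Iic_of_nonneg (by positivity),
    gaussianReal_real_Ioc_zero_half hσ hv hr.le]
  · ring
  · intro t (ht : -(r / 2) < t)
    have : -(1 / 2) < t / r := by rw [lt_div_iff₀ hr]; linarith
    exact clampInt_eq_right hab (by linarith)
  · intro t ht
    have : -(1 / 2) ≤ t / r := by linarith [le_of_clampInt_eq_right hab ht]
    rw [le_div_iff₀ hr] at this
    exact (by linarith : -(r / 2) ≤ t)

lemma gaussianReal_real_clampInt_eq (hσ : 0 < σ) (hv : (v : ℝ) = σ ^ 2) (hr : 0 < r)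
    (hab : a < b) (ham : a ≤ m) (hmb : m ≤ b) :
    (gaussianReal 0 v).real {t | clampInt a b (m + t / r) = m}
      = if a < m ∧ m < b then phi σ r else (1 + phi σ r) / 2 := by
  split_ifs with hm
  · exact gaussianReal_real_clampInt_eq_of_lt_of_lt hσ hv hr hm.1 hm.2
  · obtain rfl | rfl : m = a ∨ m = b := by omega
    · exact gaussianReal_real_clampInt_left hσ hv hr hab
    · exact gaussianReal_real_clampInt_right hσ hv hr hab

lemma phi_le_gaussianReal_real_clampInt (hσ : 0 < σ) (hv : (v : ℝ) = σ ^ 2) (hr : 0 < r)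
    (hab : a < b) (ham : a ≤ m) (hmb : m ≤ b) :
    phi σ r ≤ (gaussianReal 0 v).real {t | clampInt a b (m + t / r) = m}
      ∧ ((gaussianReal 0 v).real {t | clampInt a b (m + t / r) = m} = phi σ r
        ↔ a < m ∧ m < b) := by
  have := phi_lt_one hσ hr
  rw [gaussianReal_real_clampInt_eq hσ hv hr hab ham hmb]
  split_ifs with h
  · exact ⟨le_rfl, iff_of_true rfl h⟩
  · exact ⟨by linarith, iff_of_false (fun _ => by linarith) h⟩

lemma gaussianReal_real_clampInt_le (hσ : 0 < σ) (hv : (v : ℝ) = σ ^ 2) (hr : 0 < r)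
    (hab : a < b) (ham : a ≤ m) (hmb : m ≤ b) :
    (gaussianReal 0 v).real {t | clampInt a b (m + t / r) = m} ≤ (1 + phi σ r) / 2
      ∧ ((gaussianReal 0 v).real {t | clampInt a b (m + t / r) = m} = (1 + phi σ r) / 2
        ↔ m = a ∨ m = b) := by
  have := phi_lt_one hσ hr
  rw [gaussianReal_real_clampInt_eq hσ hv hr hab ham hmb]
  split_ifs with h
  · exact ⟨by linarith, iff_of_false (fun _ => by linarith) (by omega)⟩
  · exact ⟨le_rfl, iff_of_true rfl (by omega)⟩

end CoordinateSuccess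

theorem Finset.prod_eq_prod_iff_of_le_of_pos {ι R : Type*} [CommMonoidWithZero R] [PartialOrder R]
    [ZeroLEOneClass R] [PosMulStrictMono R] [Nontrivial R] {s : Finset ι} {f g : ι → R}
    (hf : ∀ i ∈ s, 0 < f i) (hfg : ∀ i ∈ s, f i ≤ g i) :
    ∏ i ∈ s, f i = ∏ i ∈ s, g i ↔ ∀ i ∈ s, f i = g i := by
  refine ⟨fun h => ?_, Finset.prod_congr rfl⟩
  by_contra! ⟨i, hi, hne⟩
  exact (Finset.prod_lt_prod hf hfg ⟨i, hi, (hfg i hi).lt_of_ne hne⟩).ne h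

theorem success_prob_boxBabai_bounds_general
    {n : ℕ}
    (R : Matrix (Fin n) (Fin n) ℝ)
    (hupper : ∀ i j : Fin n, j < i → R i j = 0)
    (hdiag : ∀ i : Fin n, 0 < R i i)
    (σ : ℝ) (hσ : 0 < σ)
    (l u : Fin n → ℤ) (hlu : ∀ i, l i < u i)
    (xhat : Fin n → ℤ) (hxl : ∀ i, l i ≤ xhat i) (hxu : ∀ i, xhat i ≤ u i)
    {Ω : Type} [MeasurableSpace Ω] (P : Measure Ω)
    (v : Ω → Fin n → ℝ)
    (hv : Measure.map v P = Measure.pi fun _ : Fin n => gaussianReal 0 ⟨σ ^ 2, sq_nonneg σ⟩) :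
    (∏ i, phi σ (R i i)) ≤ (P {ω | babaiDetector R l u (fun i => (R *ᵥ (fun j => (xhat j : ℝ))) i + v ω i) = xhat}).toReal
    ∧ (P {ω | babaiDetector R l u (fun i => (R *ᵥ (fun j => (xhat j : ℝ))) i + v ω i) = xhat}).toReal ≤ (2 ^ n : ℝ)⁻¹ * ∏ i, (1 + phi σ (R i i))
    ∧ ((P {ω | babaiDetector R l u (fun i => (R *ᵥ (fun j => (xhat j : ℝ))) i + v ω i) = xhat}).toReal = ∏ i, phi σ (R i i)
        ↔ ∀ i, l i < xhat i ∧ xhat i < u i)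
    ∧ ((P {ω | babaiDetector R l u (fun i => (R *ᵥ (fun j => (xhat j : ℝ))) i + v ω i) = xhat}).toReal = (2 ^ n : ℝ)⁻¹ * ∏ i, (1 + phi σ (R i i))
        ↔ ∀ i, xhat i = l i ∨ xhat i = u i) := by
  -- instance search does not see through the literal `⟨σ ^ 2, _⟩ : {r // 0 ≤ r}`
  obtain ⟨V, hV, hv⟩ : ∃ V : ℝ≥0, (V : ℝ) = σ ^ 2 ∧ P.map v = Measure.pi fun _ => gaussianReal 0 V :=
    ⟨_, rfl, hv⟩
  rw [← measureReal_def,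
    measureReal_babaiDetector_eq_prod hupper (fun i => (hdiag i).ne') l u xhat hv]
  have hlow i := phi_le_gaussianReal_real_clampInt hσ hV (hdiag i) (hlu i) (hxl i) (hxu i)
  have hupp i := gaussianReal_real_clampInt_le hσ hV (hdiag i) (hlu i) (hxl i) (hxu i)
  have hφ i : 0 < phi σ (R i i) := phi_pos hσ (hdiag i)
  have hhalf : (2 ^ n : ℝ)⁻¹ * ∏ i, (1 + phi σ (R i i)) = ∏ i, (1 + phi σ (R i i)) / 2 := by
    rw [Finset.prod_div_distrib, Finset.prod_const, Finset.card_univ, Fintype.card_fin]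
    ring
  rw [hhalf]
  refine ⟨Finset.prod_le_prod (fun i _ => (hφ i).le) fun i _ => (hlow i).1,
    Finset.prod_le_prod (fun i _ => ((hφ i).trans_le (hlow i).1).le) fun i _ => (hupp i).1, ?_, ?_⟩
  · rw [eq_comm, Finset.prod_eq_prod_iff_of_le_of_pos (fun i _ => hφ i) fun i _ => (hlow i).1]
    simp only [Finset.mem_univ, forall_const, eq_comm (a := phi _ _), (hlow _).2]
  · rw [Finset.prod_eq_prod_iff_of_le_of_pos (fun i _ => (hφ i).trans_le (hlow i).1)
      fun i _ => (hupp i).1]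
    simp only [Finset.mem_univ, forall_const, (hupp _).2]

/-- Lower and upper bounds on the success probability of the box-constrained Babai detector
for a deterministic parameter, with the exact attainment conditions
(Corollary 2 of the paper). -/
theorem success_prob_boxBabai_bounds
    {n : ℕ} (hn : 1 ≤ n)
    (R : Matrix (Fin n) (Fin n) ℝ)
    (hupper : ∀ i j : Fin n, j < i → R i j = 0)
    (hdiag : ∀ i : Fin n, 0 < R i i)
    (σ : ℝ) (hσ : 0 < σ)
    (l u : Fin n → ℤ) (hlu : ∀ i, l i < u i)
    (xhat : Fin n → ℤ) (hxl : ∀ i, l i ≤ xhat i) (hxu : ∀ i, xhat i ≤ u i)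
    {Ω : Type} [MeasurableSpace Ω] (P : Measure Ω) [IsProbabilityMeasure P]
    (v : Ω → Fin n → ℝ) (hmv : Measurable v)
    (hv : Measure.map v P = Measure.pi fun _ : Fin n => gaussianReal 0 ⟨σ ^ 2, sq_nonneg σ⟩) :
    (∏ i, phi σ (R i i)) ≤ (P {ω | babaiDetector R l u (fun i => (R *ᵥ (fun j => (xhat j : ℝ))) i + v ω i) = xhat}).toReal
    ∧ (P {ω | babaiDetector R l u (fun i => (R *ᵥ (fun j => (xhat j : ℝ))) i + v ω i) = xhat}).toReal ≤ (2 ^ n : ℝ)⁻¹ * ∏ i, (1 + phi σ (R i i))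
    ∧ ((P {ω | babaiDetector R l u (fun i => (R *ᵥ (fun j => (xhat j : ℝ))) i + v ω i) = xhat}).toReal = ∏ i, phi σ (R i i)
        ↔ ∀ i, l i < xhat i ∧ xhat i < u i)
    ∧ ((P {ω | babaiDetector R l u (fun i => (R *ᵥ (fun j => (xhat j : ℝ))) i + v ω i) = xhat}).toReal = (2 ^ n : ℝ)⁻¹ * ∏ i, (1 + phi σ (R i i))
        ↔ ∀ i, xhat i = l i ∨ xhat i = u i) :=
  success_prob_boxBabai_bounds_general R hupper hdiag σ hσ l u hlu xhat hxl hxu P v hv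
end

section
/- Equivalently to the comparison of success probabilities for a uniformly distributed parameter: let n ≥ 1, let R be an n×n real upper triangular matrix with positive diagonal entries r_11,…,r_nn, let σ > 0, and let B = {x ∈ ℤⁿ : ℓ ≤ x ≤ u} with ℓ, u ∈ ℤⁿ and ℓ_i < u_i for all i. For x̄ ∈ B define J(x̄) = det(R)/(2πσ²)^{n/2} · ∫_{I_1(x̄_1)×⋯×I_n(x̄_n)} exp(−‖Rξ‖²/(2σ²)) dξ, where I_i(x̄_i) = (−∞, 1/2] if x̄_i = ℓ_i, I_i(x̄_i) = [−1/2, 1/2] if ℓ_i < x̄_i < u_i, and I_i(x̄_i) = [−1/2, ∞) if x̄_i = u_i. Then (1/∏_{i=1}^n (u_i − ℓ_i + 1)) ∑_{x̄ ∈ B} J(x̄) ≤ ∏_{i=1}^n [ 1/(u_i − ℓ_i + 1) + ((u_i − ℓ_i)/(u_i − ℓ_i + 1)) · φ_σ(r_ii) ]. -/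
open MeasureTheory ProbabilityTheory Matrix
open scoped ENNReal NNReal

/-!
Summing the indicator of `∏ᵢ Iᵢ(x̄ᵢ)` over the box gives the weight
`∏ᵢ (1 + (uᵢ - lᵢ) · 1{|ξᵢ| ≤ 1/2})`, so the sum of the `J(x̄)` is the integral of this weight
against the density of `ξ` for which `Rξ ~ N(0, σ² I)`. Since `R` is upper triangular, that
density is `∏ᵢ rᵢᵢ · pdf((Rξ)ᵢ)` and `ξ₁` only enters the first factor; integrating `ξ₁` out for
fixed `ξ₂, …, ξₙ` leaves a Gaussian in `ξ₁` with variance `(σ/r₁₁)²` and some mean. A centred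
interval carries the largest mass among all translates under a centred Gaussian, so this step
contributes at most `1 + (u₁ - l₁) φ_σ(r₁₁)`, and induction on `n` gives the product.
-/

open Set
open scoped Real

theorem intervalIntegral_comp_add_right_le_of_abs_antitone {f : ℝ → ℝ} (hf : Continuous f)
    (hmono : ∀ x y, |x| ≤ |y| → f y ≤ f x) {a : ℝ} (ha : 0 ≤ a) (c : ℝ) :
    ∫ x in (-a)..a, f (x + c) ≤ ∫ x in (-a)..a, f x := by
  wlog hc : 0 ≤ c generalizing c
  · have heven : ∀ x, f (-x) = f x := fun x =>
      le_antisymm (hmono _ _ (abs_neg x).ge) (hmono _ _ (abs_neg x).le)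
    have hneg := intervalIntegral.integral_comp_neg (a := -a) (b := a) (fun x => f (x + -c))
    rw [neg_neg] at hneg
    calc ∫ x in (-a)..a, f (x + c) = ∫ x in (-a)..a, f (x + -c) := by
          rw [← hneg]
          congr 1 with x
          rw [← heven, neg_add]
      _ ≤ _ := this (-c) (by linarith)
  have hint : ∀ p q : ℝ, IntervalIntegrable f volume p q := hf.intervalIntegrable
  -- the mass gained on `[a, a + c]` is the reflection of the mass lost on `[-a, -a + c]`
  have hgain : ∫ x in a..(a + c), f x ≤ ∫ x in (-a)..(-a + c), f x := by
    have hshift := intervalIntegral.integral_comp_add_right f (2 * a) (a := -a) (b := -a + c)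
    rw [show -a + 2 * a = a by ring, show -a + c + 2 * a = a + c by ring] at hshift
    rw [← hshift]
    refine intervalIntegral.integral_mono_on (by linarith)
      ((hf.comp (continuous_add_const _)).intervalIntegrable _ _) (hint _ _)
      fun x hx => hmono _ _ ?_
    rw [abs_of_nonneg (show 0 ≤ x + 2 * a by linarith [hx.1])]
    exact abs_le.2 ⟨by linarith [hx.1], by linarith⟩
  rw [intervalIntegral.integral_comp_add_right,
    ← intervalIntegral.integral_add_adjacent_intervals (hint _ a) (hint _ (a + c)),
    ← intervalIntegral.integral_add_adjacent_intervals (hint (-a) (-a + c)) (hint _ a)]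
  linarith

theorem intervalIntegral_neg_self_eq_two_mul_of_even {f : ℝ → ℝ} (hf : Continuous f)
    (heven : f.Even) (b : ℝ) :
    ∫ x in (-b)..b, f x = 2 * ∫ x in (0 : ℝ)..b, f x := by
  have hneg := intervalIntegral.integral_comp_neg (a := 0) (b := b) f
  rw [neg_zero] at hneg
  simp only [heven.eq] at hneg
  rw [← intervalIntegral.integral_add_adjacent_intervals (hf.intervalIntegrable _ 0)
    (hf.intervalIntegrable 0 _), ← hneg, two_mul]

lemma continuous_gaussianPDFReal (μ : ℝ) (v : ℝ≥0) : Continuous (gaussianPDFReal μ v) := by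
  unfold gaussianPDFReal
  fun_prop

lemma gaussianPDFReal_zero_le_of_abs_le (v : ℝ≥0) {x y : ℝ} (h : |x| ≤ |y|) :
    gaussianPDFReal 0 v y ≤ gaussianPDFReal 0 v x := by
  simp only [gaussianPDFReal, sub_zero]
  gcongr _ * rexp ?_
  exact div_le_div_of_nonneg_right (neg_le_neg (sq_le_sq.2 h)) (by positivity)

lemma ofReal_mul_gaussianPDF_mul_add {r : ℝ} (hr : 0 < r) (v : ℝ≥0) (c x : ℝ) :
    ENNReal.ofReal r * gaussianPDF 0 v (r * x + c)
      = gaussianPDF (r⁻¹ * -c) (.mk (r ^ 2)⁻¹ (inv_nonneg.mpr (sq_nonneg _)) * v) x := by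
  rw [gaussianPDF, gaussianPDF, ← ENNReal.ofReal_mul hr.le, gaussianPDFReal_add,
    gaussianPDFReal_mul hr.ne', zero_sub, abs_inv, abs_of_pos hr, mul_inv_cancel_left₀ hr.ne']

theorem gaussianReal_Icc_le_gaussianReal_zero (μ : ℝ) (v : ℝ≥0) {a : ℝ} (ha : 0 ≤ a) :
    gaussianReal μ v (Icc (-a) a) ≤ gaussianReal 0 v (Icc (-a) a) := by
  rcases eq_or_ne v 0 with rfl | hv
  · rw [gaussianReal_zero_var, gaussianReal_zero_var,
      Measure.dirac_apply_of_mem (show (0 : ℝ) ∈ Icc (-a) a from ⟨neg_nonpos.2 ha, ha⟩)]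
    exact prob_le_one
  rw [gaussianReal_apply_eq_integral _ hv, gaussianReal_apply_eq_integral _ hv,
    integral_Icc_eq_integral_Ioc, integral_Icc_eq_integral_Ioc,
    ← intervalIntegral.integral_of_le (by linarith),
    ← intervalIntegral.integral_of_le (by linarith)]
  refine ENNReal.ofReal_le_ofReal ?_
  simpa only [gaussianPDFReal_add, zero_sub, neg_neg] using
    intervalIntegral_comp_add_right_le_of_abs_antitone (continuous_gaussianPDFReal 0 v)
      (fun _ _ => gaussianPDFReal_zero_le_of_abs_le v) ha (-μ)

lemma phi_nonneg {σ r : ℝ} (hσ : 0 < σ) (hr : 0 ≤ r) : 0 ≤ phi σ r :=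
  mul_nonneg (by positivity)
    (intervalIntegral.integral_nonneg (by positivity) fun _ _ => (Real.exp_pos _).le)

theorem ofReal_phi_eq_gaussianReal {σ r : ℝ} (hσ : 0 < σ) (hr : 0 < r) {v : ℝ≥0}
    (hv : (v : ℝ) = (σ / r) ^ 2) :
    ENNReal.ofReal (phi σ r) = gaussianReal 0 v (Icc (-(1 / 2)) (1 / 2)) := by
  have hs : 0 < σ / r := div_pos hσ hr
  have hmap : gaussianReal 0 v = (gaussianReal 0 1).map (σ / r * ·) := by
    rw [gaussianReal_map_const_mul, mul_zero, mul_one]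
    congr
    exact NNReal.eq hv
  have hb : 1 / 2 / (σ / r) = r / (2 * σ) := by field_simp
  rw [hmap, Measure.map_apply (measurable_const_mul _) measurableSet_Icc,
    preimage_const_mul_Icc₀ _ _ hs, gaussianReal_apply_eq_integral 0 one_ne_zero,
    integral_Icc_eq_integral_Ioc,
    ← intervalIntegral.integral_of_le (div_le_div_of_nonneg_right (by norm_num) hs.le), neg_div,
    hb, intervalIntegral_neg_self_eq_two_mul_of_even (continuous_gaussianPDFReal 0 1)
      (fun x => by simp only [gaussianPDFReal, sub_zero, neg_sq]), phi]
  congr 1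
  simp only [gaussianPDFReal, intervalIntegral.integral_const_mul, NNReal.coe_one, mul_one,
    sub_zero]
  ring

theorem lintegral_one_add_indicator_mul_gaussianPDF_le {σ r : ℝ} (hσ : 0 < σ) (hr : 0 < r)
    {v : ℝ≥0} (hv : (v : ℝ) = σ ^ 2) (m : ℝ≥0∞) (c : ℝ) :
    ∫⁻ x, (1 + (Icc (-(1 / 2)) (1 / 2)).indicator (fun _ => m) x)
        * (ENNReal.ofReal r * gaussianPDF 0 v (r * x + c))
      ≤ 1 + m * ENNReal.ofReal (phi σ r) := by
  set w : ℝ≥0 := .mk (r ^ 2)⁻¹ (inv_nonneg.mpr (sq_nonneg _)) * v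
  have hw : (w : ℝ) = (σ / r) ^ 2 := by
    rw [NNReal.coe_mul, NNReal.coe_mk, hv]
    ring
  have hw0 : w ≠ 0 := by
    rw [← NNReal.coe_ne_zero, hw]
    positivity
  simp_rw [ofReal_mul_gaussianPDF_mul_add hr, add_mul, one_mul]
  rw [lintegral_add_left (measurable_gaussianPDF _ _), lintegral_gaussianPDF_eq_one _ hw0]
  gcongr
  calc ∫⁻ x, (Icc (-(1 / 2)) (1 / 2)).indicator (fun _ => m) x * gaussianPDF (r⁻¹ * -c) w x
      = m * gaussianReal (r⁻¹ * -c) w (Icc (-(1 / 2)) (1 / 2)) := by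
        simp_rw [← indicator_mul_left]
        rw [lintegral_indicator measurableSet_Icc,
          lintegral_const_mul _ (measurable_gaussianPDF _ _), gaussianReal_apply _ hw0]
    _ ≤ m * gaussianReal 0 w (Icc (-(1 / 2)) (1 / 2)) := by
        gcongr _ * ?_
        exact gaussianReal_Icc_le_gaussianReal_zero _ _ (a := 1 / 2) (by norm_num)
    _ = m * ENNReal.ofReal (phi σ r) := by rw [ofReal_phi_eq_gaussianReal hσ hr hw]

lemma mulVec_cons_zero {α : Type*} [NonUnitalNonAssocSemiring α] {n : ℕ}
    (R : Matrix (Fin (n + 1)) (Fin (n + 1)) α) (x : α) (y : Fin n → α) :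
    (R *ᵥ Fin.cons x y) 0 = R 0 0 * x + ∑ j, R 0 j.succ * y j := by
  simp [mulVec, dotProduct, Fin.sum_univ_succ]

lemma mulVec_cons_succ {α : Type*} [NonUnitalNonAssocSemiring α] {n : ℕ}
    {R : Matrix (Fin (n + 1)) (Fin (n + 1)) α} (hR : R.IsUpperTriangular) (x : α)
    (y : Fin n → α) (i : Fin n) :
    (R *ᵥ Fin.cons x y) i.succ = (R.submatrix Fin.succ Fin.succ *ᵥ y) i := by
  have h0 : R i.succ 0 = 0 := hR (Fin.succ_pos i)
  simp [mulVec, dotProduct, Fin.sum_univ_succ, h0]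

theorem lintegral_prod_mulVec_le_of_isUpperTriangular {n : ℕ} (R : Matrix (Fin n) (Fin n) ℝ)
    (hR : R.IsUpperTriangular) {w ρ : Fin n → ℝ → ℝ≥0∞} (hw : ∀ i, Measurable (w i))
    (hρ : ∀ i, Measurable (ρ i)) {K : Fin n → ℝ≥0∞}
    (hK : ∀ i c, ∫⁻ x, w i x * ρ i (R i i * x + c) ≤ K i) :
    ∫⁻ ξ, ∏ i, w i (ξ i) * ρ i ((R *ᵥ ξ) i) ≤ ∏ i, K i := by
  induction n with
  | zero => simp [volume_pi]
  | succ n ih =>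
    set F : (Fin n → ℝ) → ℝ≥0∞ := fun y =>
      ∏ i, w i.succ (y i) * ρ i.succ ((R.submatrix Fin.succ Fin.succ *ᵥ y) i)
    have hF : ∫⁻ y, F y ≤ ∏ i : Fin n, K i.succ :=
      ih _ (fun i j h => hR (Fin.succ_lt_succ_iff.2 h)) (fun i => hw _) (fun i => hρ _)
        (fun i => hK i.succ)
    have hpres := (volume_preserving_piFinSuccAbove (fun _ : Fin (n + 1) => ℝ) 0).symm
    have hcons : ∀ x y, (MeasurableEquiv.piFinSuccAbove (fun _ : Fin (n + 1) => ℝ) 0).symm (x, y)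
        = Fin.cons x y := fun x y => by
      simp [MeasurableEquiv.piFinSuccAbove_symm_apply, Fin.consEquiv]
    rw [← hpres.lintegral_comp_emb (MeasurableEquiv.measurableEmbedding _),
      Measure.volume_eq_prod, lintegral_prod_symm _ (by fun_prop)]
    simp only [hcons]
    calc ∫⁻ y, ∫⁻ x, ∏ i, w i (Fin.cons x y i) * ρ i ((R *ᵥ Fin.cons x y) i)
        = ∫⁻ y, (∫⁻ x, w 0 x * ρ 0 (R 0 0 * x + ∑ j, R 0 j.succ * y j)) * F y := by
          congr 1 with y
          rw [← lintegral_mul_const _ (by fun_prop)]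
          congr 1 with x
          simp only [Fin.prod_univ_succ, Fin.cons_zero, Fin.cons_succ, mulVec_cons_zero,
            mulVec_cons_succ hR, F]
      _ ≤ ∫⁻ y, K 0 * F y := by
          gcongr with y
          exact hK 0 _
      _ = K 0 * ∫⁻ y, F y := lintegral_const_mul _ (by fun_prop)
      _ ≤ ∏ i, K i := by
          rw [Fin.prod_univ_succ]
          gcongr

-- `I_i(x̄_i)` in the paper's notation, with `l = l_i`, `u = u_i` and `k = x̄_i`.
def decisionInterval (l u k : ℤ) : Set ℝ :=
  if k = l then Iic (1 / 2) else if k = u then Ici (-(1 / 2)) else Icc (-(1 / 2)) (1 / 2)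

lemma measurableSet_decisionInterval (l u k : ℤ) : MeasurableSet (decisionInterval l u k) := by
  unfold decisionInterval
  split_ifs
  exacts [measurableSet_Iic, measurableSet_Ici, measurableSet_Icc]

lemma sum_indicator_decisionInterval {l u : ℤ} (hlu : l < u) (x : ℝ) :
    ∑ k ∈ Finset.Icc l u, (decisionInterval l u k).indicator 1 x
      = 1 + (Icc (-(1 / 2)) (1 / 2)).indicator (fun _ => ENNReal.ofReal (u - l : ℤ)) x := by
  by_cases hx : x ∈ Icc (-(1 / 2) : ℝ) (1 / 2)
  · have hmem : ∀ k, x ∈ decisionInterval l u k := fun k => by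
      unfold decisionInterval
      split_ifs
      exacts [hx.2, hx.1, hx]
    simp only [indicator_of_mem (hmem _), indicator_of_mem hx, Pi.one_apply, Finset.sum_const,
      Int.card_Icc, nsmul_one]
    rw [← ENNReal.ofReal_one, ← ENNReal.ofReal_add zero_le_one (Int.cast_nonneg (by omega)),
      ← ENNReal.ofReal_natCast]
    congr 1
    rw [← Int.cast_natCast, Int.toNat_of_nonneg (by omega)]
    push_cast
    ring
  -- outside `[-1/2, 1/2]` exactly one end interval contains `x`
  have hend : ∀ e ∈ Finset.Icc l u, x ∈ decisionInterval l u e →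
      (∀ k ∈ Finset.Icc l u, k ≠ e → x ∉ decisionInterval l u k) →
      ∑ k ∈ Finset.Icc l u, (decisionInterval l u k).indicator (1 : ℝ → ℝ≥0∞) x = 1 := by
    intro e he hxe hk
    rw [Finset.sum_eq_single_of_mem e he fun k hk' hke => indicator_of_notMem (hk k hk' hke) _,
      indicator_of_mem hxe, Pi.one_apply]
  rw [indicator_of_notMem hx, add_zero]
  have hl : l ∈ Finset.Icc l u := Finset.left_mem_Icc.2 hlu.le
  have hu : u ∈ Finset.Icc l u := Finset.right_mem_Icc.2 hlu.le
  rcases not_and_or.1 hx with hx' | hx' <;> rw [not_le] at hx'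
  · have hxl : x ∈ decisionInterval l u l := by
      rw [decisionInterval, if_pos rfl]
      exact mem_Iic.2 (by linarith)
    refine hend l hl hxl fun k _ hk => ?_
    unfold decisionInterval
    split_ifs <;> simp_all
  · have hxu : x ∈ decisionInterval l u u := by
      rw [decisionInterval, if_neg hlu.ne', if_pos rfl]
      exact mem_Ici.2 (by linarith)
    refine hend u hu hxu fun k _ hk => ?_
    unfold decisionInterval
    split_ifs <;> simp_all

lemma indicator_univ_pi_one {ι α : Type*} [Fintype ι] (t : ι → Set α) (ξ : ι → α) :
    (univ.pi t).indicator (1 : (ι → α) → ℝ≥0∞) ξ = ∏ i, (t i).indicator 1 (ξ i) := by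
  by_cases h : ξ ∈ univ.pi t
  · rw [indicator_of_mem h, Pi.one_apply]
    exact (Finset.prod_eq_one fun i _ => indicator_of_mem (h i trivial) _).symm
  · obtain ⟨i, -, hi⟩ := not_forall₂.1 h
    rw [indicator_of_notMem h]
    exact (Finset.prod_eq_zero (Finset.mem_univ i) (indicator_of_notMem hi _)).symm

lemma sum_setLIntegral_univ_pi {ι κ α : Type*} [Fintype ι] [DecidableEq ι] [MeasurableSpace α]
    {μ : Measure (ι → α)} (S : ι → Finset κ) {t : ι → κ → Set α}
    (ht : ∀ i k, MeasurableSet (t i k)) {g : (ι → α) → ℝ≥0∞} (hg : Measurable g) :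
    ∑ p ∈ Fintype.piFinset S, ∫⁻ ξ in univ.pi (fun i => t i (p i)), g ξ ∂μ
      = ∫⁻ ξ, (∏ i, ∑ k ∈ S i, (t i k).indicator 1 (ξ i)) * g ξ ∂μ := by
  have hmeas : ∀ p : ι → κ, MeasurableSet (univ.pi fun i => t i (p i)) := fun p =>
    MeasurableSet.univ_pi fun i => ht i (p i)
  have hset : ∀ p : ι → κ, ∫⁻ ξ in univ.pi (fun i => t i (p i)), g ξ ∂μ
      = ∫⁻ ξ, (univ.pi fun i => t i (p i)).indicator 1 ξ * g ξ ∂μ := fun p => by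
    simp_rw [← indicator_mul_left, Pi.one_apply, one_mul, lintegral_indicator (hmeas p)]
  simp_rw [hset]
  rw [← lintegral_finsetSum _ (f := fun p ξ => (univ.pi fun i => t i (p i)).indicator 1 ξ * g ξ)
    fun p _ => (measurable_one.indicator (hmeas p)).mul hg]
  simp_rw [← Finset.sum_mul, Finset.prod_univ_sum, indicator_univ_pi_one]

lemma prod_gaussianPDFReal_zero {ι : Type*} [Fintype ι] (v : ℝ≥0) (y : ι → ℝ) :
    ∏ i, gaussianPDFReal 0 v (y i)
      = rexp (-(∑ i, y i ^ 2) / (2 * v)) / (2 * π * v) ^ ((Fintype.card ι : ℝ) / 2) := by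
  simp only [gaussianPDFReal, sub_zero]
  rw [Finset.prod_mul_distrib, Finset.prod_const, Finset.card_univ, ← Real.exp_sum,
    Real.sqrt_eq_rpow, ← Real.rpow_natCast, Real.inv_rpow (by positivity),
    ← Real.rpow_mul (by positivity), div_eq_inv_mul (rexp _), neg_div, Finset.sum_div,
    ← Finset.sum_neg_distrib]
  congr 3
  · ring
  · simp only [neg_div]

lemma sum_setIntegral_le_toReal {ι α : Type*} [MeasurableSpace α] {μ : Measure α}
    (s : Finset ι) (S : ι → Set α) {f : α → ℝ} (hf0 : ∀ x, 0 ≤ f x)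
    (hf : AEStronglyMeasurable f μ) {T : ℝ≥0∞} (hT : T ≠ ∞)
    (h : ∑ p ∈ s, ∫⁻ x in S p, ENNReal.ofReal (f x) ∂μ ≤ T) :
    ∑ p ∈ s, ∫ x in S p, f x ∂μ ≤ T.toReal := by
  have hfin : ∀ p ∈ s, ∫⁻ x in S p, ENNReal.ofReal (f x) ∂μ ≠ ∞ := fun p hp =>
    ne_top_of_le_ne_top hT ((Finset.single_le_sum (fun _ _ => by positivity) hp).trans h)
  rw [Finset.sum_congr rfl fun p _ =>
    integral_eq_lintegral_of_nonneg_ae (ae_of_all _ hf0) hf.restrict, ← ENNReal.toReal_sum hfin]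
  exact ENNReal.toReal_mono hT h

lemma ofReal_det_mul_exp_eq_prod_gaussianPDF {n : ℕ} {R : Matrix (Fin n) (Fin n) ℝ}
    (hR : R.IsUpperTriangular) (hdiag : ∀ i, 0 < R i i) {σ : ℝ} {v : ℝ≥0}
    (hv : (v : ℝ) = σ ^ 2) (ξ : Fin n → ℝ) :
    ENNReal.ofReal (R.det / (2 * π * σ ^ 2) ^ ((n : ℝ) / 2)
        * rexp (-(∑ j, ((R *ᵥ ξ) j) ^ 2) / (2 * σ ^ 2)))
      = ∏ i, ENNReal.ofReal (R i i) * gaussianPDF 0 v ((R *ᵥ ξ) i) := by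
  simp only [gaussianPDF, ← ENNReal.ofReal_mul (hdiag _).le]
  rw [← ENNReal.ofReal_prod_of_nonneg fun i _ =>
      mul_nonneg (hdiag i).le (gaussianPDFReal_nonneg _ _ _),
    Finset.prod_mul_distrib, prod_gaussianPDFReal_zero, ← det_of_isUpperTriangular hR,
    Fintype.card_fin, hv]
  ring_nf

theorem sum_lintegral_decisionInterval_le {n : ℕ} (R : Matrix (Fin n) (Fin n) ℝ)
    (hR : R.IsUpperTriangular) (hdiag : ∀ i, 0 < R i i) {σ : ℝ} (hσ : 0 < σ) {v : ℝ≥0}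
    (hv : (v : ℝ) = σ ^ 2) {l u : Fin n → ℤ} (hlu : ∀ i, l i < u i) :
    ∑ xb ∈ Fintype.piFinset (fun i => Finset.Icc (l i) (u i)),
        ∫⁻ ξ in univ.pi (fun i => decisionInterval (l i) (u i) (xb i)),
          ∏ i, ENNReal.ofReal (R i i) * gaussianPDF 0 v ((R *ᵥ ξ) i)
      ≤ ∏ i, (1 + ENNReal.ofReal (u i - l i : ℤ) * ENNReal.ofReal (phi σ (R i i))) := by
  rw [sum_setLIntegral_univ_pi _ (fun _ => measurableSet_decisionInterval _ _) (by fun_prop)]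
  simp_rw [sum_indicator_decisionInterval (hlu _), ← Finset.prod_mul_distrib]
  exact lintegral_prod_mulVec_le_of_isUpperTriangular R hR
    (w := fun i x =>
      1 + (Icc (-(1 / 2)) (1 / 2)).indicator (fun _ => ENNReal.ofReal (u i - l i : ℤ)) x)
    (ρ := fun i y => ENNReal.ofReal (R i i) * gaussianPDF 0 v y)
    (fun _ => (measurable_const.indicator measurableSet_Icc).const_add 1) (fun _ => by fun_prop)
    fun i => lintegral_one_add_indicator_mul_gaussianPDF_le hσ (hdiag i) hv _

theorem sum_integral_decisionInterval_le {n : ℕ} (R : Matrix (Fin n) (Fin n) ℝ)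
    (hR : R.IsUpperTriangular) (hdiag : ∀ i, 0 < R i i) {σ : ℝ} (hσ : 0 < σ)
    {l u : Fin n → ℤ} (hlu : ∀ i, l i < u i) :
    ∑ xb ∈ Fintype.piFinset (fun i => Finset.Icc (l i) (u i)),
        ∫ ξ in univ.pi (fun i => decisionInterval (l i) (u i) (xb i)),
          R.det / (2 * π * σ ^ 2) ^ ((n : ℝ) / 2) * rexp (-(∑ j, ((R *ᵥ ξ) j) ^ 2) / (2 * σ ^ 2))
      ≤ ∏ i, (1 + ((u i - l i : ℤ) : ℝ) * phi σ (R i i)) := by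
  have hdet : 0 < R.det := det_of_isUpperTriangular hR ▸ Finset.prod_pos fun i _ => hdiag i
  obtain ⟨v, hv⟩ : ∃ v : ℝ≥0, (v : ℝ) = σ ^ 2 := ⟨.mk (σ ^ 2) (sq_nonneg σ), rfl⟩
  have hlin := sum_lintegral_decisionInterval_le R hR hdiag hσ hv hlu
  simp only [← ofReal_det_mul_exp_eq_prod_gaussianPDF hR hdiag hv] at hlin
  refine (sum_setIntegral_le_toReal _ _ (fun ξ => by positivity) (by fun_prop)
    (ENNReal.prod_ne_top fun i _ => by finiteness) hlin).trans_eq ?_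
  rw [ENNReal.toReal_prod]
  refine Finset.prod_congr rfl fun i _ => ?_
  rw [ENNReal.toReal_add (by finiteness) (by finiteness), ENNReal.toReal_mul, ENNReal.toReal_one,
    ENNReal.toReal_ofReal (Int.cast_nonneg (sub_nonneg.2 (hlu i).le)),
    ENNReal.toReal_ofReal (phi_nonneg hσ (hdiag i).le)]

theorem avg_roundingSuccess_le_babai_prod_general
    {n : ℕ}
    (R : Matrix (Fin n) (Fin n) ℝ)
    (hupper : ∀ i j : Fin n, j < i → R i j = 0)
    (hdiag : ∀ i : Fin n, 0 < R i i)
    (σ : ℝ) (hσ : 0 < σ)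
    (l u : Fin n → ℤ) (hlu : ∀ i, l i < u i)
    (B : Finset (Fin n → ℤ)) (hB : B = Fintype.piFinset fun i => Finset.Icc (l i) (u i)) :
    (1 / ∏ i, ((u i - l i + 1 : ℤ) : ℝ)) *
        ∑ xb ∈ B,
          R.det / (2 * Real.pi * σ ^ 2) ^ ((n : ℝ) / 2) *
            ∫ ξ in Set.univ.pi (fun i =>
            if xb i = l i then Set.Iic (1 / 2 : ℝ)
            else if xb i = u i then Set.Ici (-(1 / 2) : ℝ)
            else Set.Icc (-(1 / 2) : ℝ) (1 / 2)),
              Real.exp (-(∑ j, ((R *ᵥ ξ) j) ^ 2) / (2 * σ ^ 2))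
      ≤ ∏ i, (1 / ((u i - l i + 1 : ℤ) : ℝ)
              + (((u i - l i : ℤ) : ℝ) / ((u i - l i + 1 : ℤ) : ℝ)) * phi σ (R i i)) := by
  subst hB
  have hM : 0 ≤ ∏ i, ((u i - l i + 1 : ℤ) : ℝ) :=
    Finset.prod_nonneg fun i _ => by have := hlu i; positivity
  rw [one_div_mul_eq_div]
  simp only [← integral_const_mul]
  calc _ ≤ (∏ i, (1 + ((u i - l i : ℤ) : ℝ) * phi σ (R i i))) / ∏ i, ((u i - l i + 1 : ℤ) : ℝ) :=
        div_le_div_of_nonneg_right (sum_integral_decisionInterval_le R hupper hdiag hσ hlu) hM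
    _ = _ := by
        rw [← Finset.prod_div_distrib]
        exact Finset.prod_congr rfl fun i _ => by ring

/-- Integral form of Theorem 5 of the paper: the averaged rounding success probability over
the box is at most the product formula for the Babai success probability. -/
theorem avg_roundingSuccess_le_babai_prod
    {n : ℕ} (hn : 1 ≤ n)
    (R : Matrix (Fin n) (Fin n) ℝ)
    (hupper : ∀ i j : Fin n, j < i → R i j = 0)
    (hdiag : ∀ i : Fin n, 0 < R i i)
    (σ : ℝ) (hσ : 0 < σ)
    (l u : Fin n → ℤ) (hlu : ∀ i, l i < u i)
    (B : Finset (Fin n → ℤ)) (hB : B = Fintype.piFinset fun i => Finset.Icc (l i) (u i)) :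
    (1 / ∏ i, ((u i - l i + 1 : ℤ) : ℝ)) *
        ∑ xb ∈ B,
          R.det / (2 * Real.pi * σ ^ 2) ^ ((n : ℝ) / 2) *
            ∫ ξ in Set.univ.pi (fun i =>
            if xb i = l i then Set.Iic (1 / 2 : ℝ)
            else if xb i = u i then Set.Ici (-(1 / 2) : ℝ)
            else Set.Icc (-(1 / 2) : ℝ) (1 / 2)),
              Real.exp (-(∑ j, ((R *ᵥ ξ) j) ^ 2) / (2 * σ ^ 2))
      ≤ ∏ i, (1 / ((u i - l i + 1 : ℤ) : ℝ)
              + (((u i - l i : ℤ) : ℝ) / ((u i - l i + 1 : ℤ) : ℝ)) * phi σ (R i i)) :=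
  avg_roundingSuccess_le_babai_prod_general R hupper hdiag σ hσ l u hlu B hB
end
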